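/- arXiv:1708.06323 — 7 statements merged into one kernel-verified Lean document; each statement's English description precedes it below -/
import Mathlib

section
/- Let A = (a_{ij}) be an N×N matrix over a (possibly noncommutative) ring such that all N² quasi-determinants |A|_{ij} exist and are invertible. Then A is invertible and its inverse is given entrywise by (A⁻¹)_{ij} = (|A|_{ji})⁻¹. -/
open Matrix

noncomputable def quasiDet {R : Type*} [Ring R] {N : ℕ}
    (A : Matrix (Fin (N + 1)) (Fin (N + 1)) R) (i j : Fin (N + 1)) : R :=
  A i j - ∑ k : Fin N, ∑ l : Fin N,
    A i (j.succAbove k) *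
      Ring.inverse (A.submatrix i.succAbove j.succAbove) k l *
      A (i.succAbove l) j

noncomputable def auxE {N : ℕ} (i : Fin (N + 1)) : Fin N ⊕ Unit ≃ Fin (N + 1) :=
  ((finSuccEquiv' i).trans (Equiv.optionEquivSumPUnit _)).symm

@[simp] lemma auxE_inl {N : ℕ} (i : Fin (N + 1)) (k : Fin N) :
    auxE i (Sum.inl k) = i.succAbove k := by
  simp [auxE, Equiv.symm_apply_eq]

@[simp] lemma auxE_inr {N : ℕ} (i : Fin (N + 1)) (u : Unit) :
    auxE i (Sum.inr u) = i := by
  simp [auxE, Equiv.symm_apply_eq]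

set_option maxHeartbeats 800000 in
lemma aux_blocks {R : Type*} [Ring R] {m n : Type*} [Fintype m] [Fintype n]
    [DecidableEq m] [DecidableEq n]
    (M : Matrix m m R) (B : Matrix m n R) (C : Matrix n m R) (D : Matrix n n R)
    [Invertible M] [Invertible (D - C * ⅟M * B)] :
    ∃ (X : Matrix m m R) (Y : Matrix m n R) (Z : Matrix n m R),
      fromBlocks M B C D * fromBlocks X Y Z (⅟(D - C * ⅟M * B)) = 1 ∧
      fromBlocks X Y Z (⅟(D - C * ⅟M * B)) * fromBlocks M B C D = 1 := by
  have hfact : fromBlocks M B C D = fromBlocks 1 0 (C * ⅟M) 1 *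
      fromBlocks M 0 0 (D - C * ⅟M * B) * fromBlocks 1 (⅟M * B) 0 1 := by
    simp only [fromBlocks_multiply, Matrix.mul_zero, Matrix.zero_mul, add_zero, zero_add,
      Matrix.one_mul, Matrix.mul_one, invOf_mul_self, Matrix.mul_invOf_cancel_left,
      Matrix.invOf_mul_cancel_right, Matrix.mul_assoc, add_sub_cancel]
  have hUU' : fromBlocks 1 (⅟M * B) 0 1 * fromBlocks 1 (-(⅟M * B)) 0 1
      = (1 : Matrix (m ⊕ n) (m ⊕ n) R) := by
    simp only [fromBlocks_multiply, Matrix.mul_zero, Matrix.zero_mul, add_zero, zero_add,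
      Matrix.one_mul, Matrix.mul_one, add_neg_cancel, neg_add_cancel, fromBlocks_one]
  have hU'U : fromBlocks 1 (-(⅟M * B)) 0 1 * fromBlocks 1 (⅟M * B) 0 1
      = (1 : Matrix (m ⊕ n) (m ⊕ n) R) := by
    simp only [fromBlocks_multiply, Matrix.mul_zero, Matrix.zero_mul, add_zero, zero_add,
      Matrix.one_mul, Matrix.mul_one, add_neg_cancel, neg_add_cancel, fromBlocks_one]
  have hLL' : fromBlocks 1 0 (C * ⅟M) 1 * fromBlocks 1 0 (-(C * ⅟M)) 1
      = (1 : Matrix (m ⊕ n) (m ⊕ n) R) := by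
    simp only [fromBlocks_multiply, Matrix.mul_zero, Matrix.zero_mul, add_zero, zero_add,
      Matrix.one_mul, Matrix.mul_one, add_neg_cancel, neg_add_cancel, fromBlocks_one]
  have hL'L : fromBlocks 1 0 (-(C * ⅟M)) 1 * fromBlocks 1 0 (C * ⅟M) 1
      = (1 : Matrix (m ⊕ n) (m ⊕ n) R) := by
    simp only [fromBlocks_multiply, Matrix.mul_zero, Matrix.zero_mul, add_zero, zero_add,
      Matrix.one_mul, Matrix.mul_one, add_neg_cancel, neg_add_cancel, fromBlocks_one]
  have hEE' : fromBlocks M 0 0 (D - C * ⅟M * B) *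
      fromBlocks (⅟M) 0 0 (⅟(D - C * ⅟M * B)) = (1 : Matrix (m ⊕ n) (m ⊕ n) R) := by
    simp only [fromBlocks_multiply, Matrix.mul_zero, Matrix.zero_mul, add_zero, zero_add,
      mul_invOf_self, fromBlocks_one]
  have hE'E : fromBlocks (⅟M) 0 0 (⅟(D - C * ⅟M * B)) *
      fromBlocks M 0 0 (D - C * ⅟M * B) = (1 : Matrix (m ⊕ n) (m ⊕ n) R) := by
    simp only [fromBlocks_multiply, Matrix.mul_zero, Matrix.zero_mul, add_zero, zero_add,
      invOf_mul_self, fromBlocks_one]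
  have hG : fromBlocks 1 (-(⅟M * B)) 0 1 * (fromBlocks (⅟M) 0 0 (⅟(D - C * ⅟M * B)) *
      fromBlocks 1 0 (-(C * ⅟M)) 1) =
      fromBlocks (⅟M + ⅟M * B * (⅟(D - C * ⅟M * B) * (C * ⅟M)))
        (-(⅟M * B * ⅟(D - C * ⅟M * B))) (-(⅟(D - C * ⅟M * B) * (C * ⅟M)))
        (⅟(D - C * ⅟M * B)) := by
    simp only [fromBlocks_multiply, Matrix.mul_zero, Matrix.zero_mul, add_zero, zero_add,
      Matrix.one_mul, Matrix.mul_one, Matrix.mul_neg, Matrix.neg_mul, neg_neg, neg_zero,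
      Matrix.mul_assoc]
  refine ⟨⅟M + ⅟M * B * (⅟(D - C * ⅟M * B) * (C * ⅟M)), -(⅟M * B * ⅟(D - C * ⅟M * B)),
    -(⅟(D - C * ⅟M * B) * (C * ⅟M)), ?_, ?_⟩
  · rw [← hG, hfact, mul_assoc (_ * _) (fromBlocks 1 (⅟M * B) 0 1),
      ← mul_assoc (fromBlocks 1 (⅟M * B) 0 1) (fromBlocks 1 (-(⅟M * B)) 0 1),
      hUU', one_mul, mul_assoc (fromBlocks 1 0 (C * ⅟M) 1),
      ← mul_assoc (fromBlocks M 0 0 (D - C * ⅟M * B)), hEE', one_mul, hLL']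
  · rw [← hG, hfact, mul_assoc (fromBlocks 1 (-(⅟M * B)) 0 1)]
    rw [mul_assoc (fromBlocks 1 0 (C * ⅟M) 1) (fromBlocks M 0 0 (D - C * ⅟M * B))
      (fromBlocks 1 (⅟M * B) 0 1)]
    rw [mul_assoc (fromBlocks (⅟M) 0 0 (⅟(D - C * ⅟M * B))) (fromBlocks 1 0 (-(C * ⅟M)) 1)]
    rw [← mul_assoc (fromBlocks 1 0 (-(C * ⅟M)) 1) (fromBlocks 1 0 (C * ⅟M) 1), hL'L, one_mul]
    rw [← mul_assoc (fromBlocks (⅟M) 0 0 (⅟(D - C * ⅟M * B))) (fromBlocks M 0 0 (D - C * ⅟M * B)),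
      hE'E, one_mul, hU'U]

lemma key {R : Type*} [Ring R] {N : ℕ}
    (A : Matrix (Fin (N + 1)) (Fin (N + 1)) R) (i j : Fin (N + 1))
    (hM : IsUnit (A.submatrix i.succAbove j.succAbove))
    (hq : IsUnit (quasiDet A i j)) :
    IsUnit A ∧ Ring.inverse A j i = Ring.inverse (quasiDet A i j) := by
  obtain ⟨iM⟩ := hM.nonempty_invertible
  obtain ⟨iq⟩ := hq.nonempty_invertible
  set M := A.submatrix i.succAbove j.succAbove with hMdef
  set B : Matrix (Fin N) Unit R := of fun k _ => A (i.succAbove k) j with hB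
  set C : Matrix Unit (Fin N) R := of fun _ l => A i (j.succAbove l) with hC
  set D : Matrix Unit Unit R := of fun _ _ => A i j with hD
  have hA' : A.submatrix (auxE i) (auxE j) = fromBlocks M B C D := by
    ext x y
    cases x <;> cases y <;> simp [fromBlocks, hMdef, hB, hC, hD]
  have hschur : D - C * ⅟M * B = of fun _ _ => quasiDet A i j := by
    ext u v
    rw [quasiDet]
    simp only [Matrix.sub_apply, Matrix.of_apply, hD, hB, hC, Matrix.mul_apply,
      Finset.sum_mul]
    congr 1
    rw [Finset.sum_comm]
    refine Finset.sum_congr rfl fun k _ => Finset.sum_congr rfl fun l _ => ?_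
    rw [Ring.inverse_invertible]
  letI iS : Invertible (D - C * ⅟M * B) := by
    rw [hschur]
    exact ⟨of fun _ _ => ⅟(quasiDet A i j),
      by ext u v; simp [Matrix.mul_apply, Matrix.one_apply],
      by ext u v; simp [Matrix.mul_apply, Matrix.one_apply]⟩
  obtain ⟨X, Y, Z, h1, h2⟩ := aux_blocks M B C D
  set G : Matrix (Fin N ⊕ Unit) (Fin N ⊕ Unit) R :=
    fromBlocks X Y Z (⅟(D - C * ⅟M * B)) with hGdef
  letI iF : Invertible (fromBlocks M B C D) := ⟨G, h2, h1⟩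
  letI iA : Invertible A := by
    refine ⟨(G).submatrix (auxE j).symm (auxE i).symm, ?_, ?_⟩
    · have : A = (fromBlocks M B C D).submatrix (auxE i).symm (auxE j).symm := by
        rw [← hA']; simp [Matrix.submatrix_submatrix]
      rw [this, Matrix.submatrix_mul_equiv, h2, Matrix.submatrix_one_equiv]
    · have : A = (fromBlocks M B C D).submatrix (auxE i).symm (auxE j).symm := by
        rw [← hA']; simp [Matrix.submatrix_submatrix]
      rw [this, Matrix.submatrix_mul_equiv, h1, Matrix.submatrix_one_equiv]
  refine ⟨isUnit_of_invertible A, ?_⟩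
  have hinvA : ⅟A = G.submatrix (auxE j).symm (auxE i).symm := rfl
  have hSinv : ⅟(D - C * ⅟M * B) = of fun _ _ => Ring.inverse (quasiDet A i j) := by
    refine invOf_eq_right_inv ?_
    rw [hschur]
    ext u v
    simp [Matrix.mul_apply, Matrix.one_apply, Ring.inverse_invertible]
  have hj : (auxE j).symm j = Sum.inr Unit.unit := by
    rw [Equiv.symm_apply_eq]; simp
  have hi : (auxE i).symm i = Sum.inr Unit.unit := by
    rw [Equiv.symm_apply_eq]; simp
  rw [Ring.inverse_invertible, hinvA, Matrix.submatrix_apply, hj, hi, hGdef,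
    fromBlocks_apply₂₂, hSinv]
  rfl

/-- if all `N²` quasi-determinants of an `N×N` matrix `A` over a
(possibly noncommutative) ring exist (i.e. the complementary submatrices are
invertible) and are invertible, then `A` is invertible and
`(A⁻¹)_{ij} = (|A|_{ji})⁻¹` entrywise. -/
theorem stmt9 {R : Type*} [Ring R] {N : ℕ}
    (A : Matrix (Fin (N + 1)) (Fin (N + 1)) R)
    (hsub : ∀ i j : Fin (N + 1), IsUnit (A.submatrix i.succAbove j.succAbove))
    (hq : ∀ i j : Fin (N + 1), IsUnit (quasiDet A i j)) :
    IsUnit A ∧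
      ∀ i j : Fin (N + 1),
        Ring.inverse A i j = Ring.inverse (quasiDet A j i) := by
  exact ⟨(key A 0 0 (hsub 0 0) (hq 0 0)).1,
    fun i j => (key A j i (hsub j i) (hq j i)).2⟩
end

section
/- For an N×N matrix A over a commutative ring whose relevant minors are invertible, the quasi-determinant equals a ratio of determinants: |A|_{ij} = (−1)^{i+j} det(A) / det(A^{ij}), where A^{ij} is A with row i and column j deleted. -/
open Matrix

/-!
Moving row `i` and column `j` of `A` to the front by the cycles `i.cycleRange`, `j.cycleRange`
(of signs `(-1)^i` and `(-1)^j`) gives a matrix `B` with `|B|_{00} = |A|_{ij}` and lower-right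
minor `A^{ij}`. Splitting `B` into blocks around this invertible minor, `|B|_{00}` is exactly the
Schur complement, so the Schur determinant formula reads `det B = det A^{ij} * |A|_{ij}`.
-/

namespace Matrix

theorem submatrix_cycleRange_symm_succ {α : Type*} {n : ℕ}
    (A : Matrix (Fin (n + 1)) (Fin (n + 1)) α) (i j : Fin (n + 1)) :
    (A.submatrix i.cycleRange.symm j.cycleRange.symm).submatrix Fin.succ Fin.succ =
      A.submatrix i.succAbove j.succAbove := by
  ext k l
  simp [Fin.cycleRange_symm_succ]

theorem det_submatrix_cycleRange_symm {R : Type*} [CommRing R] {n : ℕ}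
    (A : Matrix (Fin (n + 1)) (Fin (n + 1)) R) (i j : Fin (n + 1)) :
    (A.submatrix i.cycleRange.symm j.cycleRange.symm).det = (-1) ^ ((i : ℕ) + (j : ℕ)) * A.det := by
  have hsplit : A.submatrix i.cycleRange.symm j.cycleRange.symm =
      (A.submatrix id j.cycleRange.symm).submatrix i.cycleRange.symm id := rfl
  rw [hsplit, det_permute, det_permute', Equiv.Perm.sign_symm, Equiv.Perm.sign_symm,
    Fin.sign_cycleRange, Fin.sign_cycleRange, pow_add]
  push_cast
  ring

end Matrix

section QuasiDet

variable {R : Type*} [CommRing R] {n : ℕ}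

theorem det_eq_det_submatrix_succ_mul_quasiDet (B : Matrix (Fin (n + 1)) (Fin (n + 1)) R)
    (h : IsUnit (B.submatrix Fin.succ Fin.succ).det) :
    B.det = (B.submatrix Fin.succ Fin.succ).det * quasiDet B 0 0 := by
  set M := B.submatrix Fin.succ Fin.succ
  have : Invertible M := M.invertibleOfIsUnitDet h
  let e : Fin n ⊕ Unit ≃ Fin (n + 1) :=
    (Equiv.optionEquivSumPUnit (Fin n)).symm.trans (finSuccEquiv n).symm
  have hblocks : B.submatrix e e = fromBlocks M (of fun k (_ : Unit) => B k.succ 0)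
      (of fun (_ : Unit) l => B 0 l.succ) (of fun _ _ => B 0 0) := by
    ext (k | _) (l | _) <;> simp [e, M]
  rw [← det_submatrix_equiv_self e B, hblocks, det_fromBlocks₁₁, det_unique (n := Unit)]
  simp only [quasiDet, Fin.succAbove_zero, invOf_eq_nonsing_inv, nonsing_inv_eq_ringInverse, M]
  congr 1
  rw [Matrix.sub_apply]
  simp only [mul_apply, of_apply, Finset.sum_mul]
  rw [Finset.sum_comm]

theorem quasiDet_submatrix_cycleRange_symm (A : Matrix (Fin (n + 1)) (Fin (n + 1)) R)
    (i j : Fin (n + 1)) :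
    quasiDet (A.submatrix i.cycleRange.symm j.cycleRange.symm) 0 0 = quasiDet A i j := by
  simp only [quasiDet, Fin.succAbove_zero, submatrix_cycleRange_symm_succ, submatrix_apply,
    Fin.cycleRange_symm_zero, Fin.cycleRange_symm_succ]

end QuasiDet

/-- over a commutative ring, when the complementary minor is
invertible, the quasi-determinant is a ratio of determinants:
`|A|_{ij} = (−1)^{i+j} det(A) / det(A^{ij})`. -/
theorem stmt10 {R : Type*} [CommRing R] {N : ℕ}
    (A : Matrix (Fin (N + 1)) (Fin (N + 1)) R) (i j : Fin (N + 1))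
    (h : IsUnit (A.submatrix i.succAbove j.succAbove).det) :
    quasiDet A i j =
      (-1 : R) ^ ((i : ℕ) + (j : ℕ)) * A.det *
        Ring.inverse (A.submatrix i.succAbove j.succAbove).det := by
  have hdet := det_eq_det_submatrix_succ_mul_quasiDet
    (A.submatrix i.cycleRange.symm j.cycleRange.symm)
    (by rwa [submatrix_cycleRange_symm_succ])
  rw [submatrix_cycleRange_symm_succ, quasiDet_submatrix_cycleRange_symm,
    det_submatrix_cycleRange_symm] at hdet
  rw [hdet, mul_comm, ← mul_assoc, Ring.inverse_mul_cancel _ h, one_mul]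
end

section
/- Row homological relation for quasi-determinants: for an N×N matrix A over a ring with the relevant quasi-determinants defined and invertible, and indices s ≠ i, l ≠ j, one has −|A|_{ij} · (|A^{il}|_{sj})⁻¹ = |A|_{il} · (|A^{ij}|_{sl})⁻¹, where A^{ij} denotes A with row i and column j removed. -/
open Matrix

/-!
Deleting row `i` of `A` leaves a matrix `B` with one more column than rows. When the minor
`A^{ij}` is invertible, the right kernel of `B` is spanned by a vector `y` with `y j = 1`, and
`|A|_{ij}` is the pairing of row `i` of `A` with `y`. The kernel vector of `B` normalised at `l`
is therefore `y c` with `c` its `j`-th entry, so `|A|_{il} = |A|_{ij} c`. To find `c`, delete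
row `s` of `B` as well: the kernel of the remaining rows is spanned by the kernel vectors of the
rows `≠ s` of `A^{il}` and of `A^{ij}`, padded by a zero in column `l` resp. `j`, and their
pairings with row `s` are `|A^{il}|_{sj}` and `|A^{ij}|_{sl}`. Expanding the kernel vector of `B`
normalised at `l` in these two and pairing with row `s` gives `|A^{il}|_{sj} c + |A^{ij}|_{sl} = 0`.
-/

namespace Matrix

variable {R : Type*} [Ring R] {m n : ℕ}

theorem dotProduct_insertNth (u : Fin (n + 1) → R) (j : Fin (n + 1)) (a : R) (v : Fin n → R) :
    u ⬝ᵥ j.insertNth a v = u j * a + j.removeNth u ⬝ᵥ v := by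
  simp [dotProduct, Fin.sum_univ_succAbove _ j, Fin.removeNth]

theorem mulVec_insertNth (M : Matrix (Fin m) (Fin (n + 1)) R) (j : Fin (n + 1)) (a : R)
    (v : Fin n → R) :
    M *ᵥ j.insertNth a v = (fun r => M r j * a) + M.submatrix id j.succAbove *ᵥ v := by
  funext r
  exact dotProduct_insertNth (M r) j a v

theorem mulVec_eq_submatrix_mulVec_removeNth (M : Matrix (Fin m) (Fin (n + 1)) R)
    {j : Fin (n + 1)} {x : Fin (n + 1) → R} (hx : x j = 0) :
    M *ᵥ x = M.submatrix id j.succAbove *ᵥ j.removeNth x := by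
  conv_lhs => rw [← Fin.insertNth_self_removeNth j x, hx, mulVec_insertNth]
  simp only [mul_zero]
  exact zero_add _

noncomputable def kerVec (M : Matrix (Fin n) (Fin (n + 1)) R) (j : Fin (n + 1)) :
    Fin (n + 1) → R :=
  j.insertNth 1 (-(Ring.inverse (M.submatrix id j.succAbove) *ᵥ fun r => M r j))

variable {M : Matrix (Fin n) (Fin (n + 1)) R} {j : Fin (n + 1)}

@[simp]
theorem kerVec_self : kerVec M j j = 1 :=
  Fin.insertNth_apply_same _ _ _

theorem mulVec_kerVec (h : IsUnit (M.submatrix id j.succAbove)) : M *ᵥ kerVec M j = 0 := by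
  rw [kerVec, mulVec_insertNth, mulVec_neg, mulVec_mulVec, Ring.mul_inverse_cancel _ h,
    one_mulVec]
  funext r
  simp

theorem eq_zero_of_mulVec_eq_zero_of_apply_eq_zero (h : IsUnit (M.submatrix id j.succAbove))
    {x : Fin (n + 1) → R} (hx : M *ᵥ x = 0) (hxj : x j = 0) : x = 0 := by
  rw [mulVec_eq_submatrix_mulVec_removeNth M hxj] at hx
  have hx' : j.removeNth x = 0 := by
    rw [← one_mulVec (j.removeNth x), ← Ring.inverse_mul_cancel _ h, ← mulVec_mulVec, hx,
      mulVec_zero]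
  rw [← Fin.insertNth_self_removeNth j x, hxj, hx']
  funext c
  cases c using j.succAboveCases <;> simp

theorem eq_op_smul_kerVec (h : IsUnit (M.submatrix id j.succAbove)) {x : Fin (n + 1) → R}
    (hx : M *ᵥ x = 0) : x = MulOpposite.op (x j) • kerVec M j := by
  rw [← sub_eq_zero]
  refine eq_zero_of_mulVec_eq_zero_of_apply_eq_zero h ?_ ?_
  · rw [mulVec_sub, mulVec_smul, mulVec_kerVec h, hx, smul_zero, sub_zero]
  · simp

variable {C : Matrix (Fin n) (Fin (n + 2)) R} {l : Fin (n + 2)} {k : Fin (n + 1)}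

theorem mulVec_insertNth_zero_kerVec
    (h : IsUnit ((C.submatrix id l.succAbove).submatrix id k.succAbove)) :
    C *ᵥ l.insertNth 0 (kerVec (C.submatrix id l.succAbove) k) = 0 := by
  rw [mulVec_eq_submatrix_mulVec_removeNth C (Fin.insertNth_apply_same _ _ _),
    Fin.removeNth_insertNth]
  exact mulVec_kerVec h

theorem eq_op_smul_insertNth_zero_kerVec
    (h : IsUnit ((C.submatrix id l.succAbove).submatrix id k.succAbove))
    {x : Fin (n + 2) → R} (hx : C *ᵥ x = 0) (hxl : x l = 0) :
    x = MulOpposite.op (x (l.succAbove k)) •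
      l.insertNth 0 (kerVec (C.submatrix id l.succAbove) k) := by
  rw [mulVec_eq_submatrix_mulVec_removeNth C hxl] at hx
  conv_lhs => rw [← Fin.insertNth_self_removeNth l x, hxl, eq_op_smul_kerVec h hx]
  funext c
  cases c using l.succAboveCases <;> simp [Fin.removeNth]

end Matrix

theorem quasiDet_eq_dotProduct_kerVec {R : Type*} [Ring R] {n : ℕ}
    (A : Matrix (Fin (n + 1)) (Fin (n + 1)) R) (i j : Fin (n + 1)) :
    quasiDet A i j = A i ⬝ᵥ kerVec (A.submatrix i.succAbove id) j := by
  rw [kerVec, dotProduct_insertNth, quasiDet]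
  simp [dotProduct, mulVec, Fin.removeNth, Finset.mul_sum, mul_assoc, sub_eq_add_neg]

theorem quasiDet_eq_quasiDet_mul_kerVec {R : Type*} [Ring R] {n : ℕ}
    (A : Matrix (Fin (n + 1)) (Fin (n + 1)) R) (i j l : Fin (n + 1))
    (hj : IsUnit (A.submatrix i.succAbove j.succAbove))
    (hl : IsUnit (A.submatrix i.succAbove l.succAbove)) :
    quasiDet A i l = quasiDet A i j * kerVec (A.submatrix i.succAbove id) l j := by
  have hy := eq_op_smul_kerVec (j := j) hj (mulVec_kerVec (M := A.submatrix i.succAbove id) hl)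
  rw [quasiDet_eq_dotProduct_kerVec, quasiDet_eq_dotProduct_kerVec]
  conv_lhs => rw [hy, dotProduct_smul, op_smul_eq_mul]

theorem dotProduct_insertNth_zero_kerVec {R : Type*} [Ring R] {n : ℕ}
    (B : Matrix (Fin (n + 1)) (Fin (n + 2)) R) (s : Fin (n + 1)) (l : Fin (n + 2))
    (k : Fin (n + 1)) :
    B s ⬝ᵥ l.insertNth 0 (kerVec ((B.submatrix s.succAbove id).submatrix id l.succAbove) k) =
      quasiDet (B.submatrix id l.succAbove) s k := by
  rw [dotProduct_insertNth, mul_zero, zero_add, quasiDet_eq_dotProduct_kerVec]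
  rfl

theorem quasiDet_mul_kerVec_add_quasiDet {R : Type*} [Ring R] {n : ℕ}
    (B : Matrix (Fin (n + 1)) (Fin (n + 2)) R) (s : Fin (n + 1)) {j l : Fin (n + 2)}
    {jd ld : Fin (n + 1)} (hjd : l.succAbove jd = j) (hld : j.succAbove ld = l)
    (hl : IsUnit (B.submatrix id l.succAbove))
    (hlj : IsUnit ((B.submatrix id l.succAbove).submatrix s.succAbove jd.succAbove))
    (hjl : IsUnit ((B.submatrix id j.succAbove).submatrix s.succAbove ld.succAbove)) :
    quasiDet (B.submatrix id l.succAbove) s jd * kerVec B l j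
      + quasiDet (B.submatrix id j.succAbove) s ld = 0 := by
  set C := B.submatrix s.succAbove id
  set zj : Fin (n + 2) → R := l.insertNth 0 (kerVec (C.submatrix id l.succAbove) jd)
  set zl : Fin (n + 2) → R := j.insertNth 0 (kerVec (C.submatrix id j.succAbove) ld)
  set y := kerVec B l
  have hy : B *ᵥ y = 0 := mulVec_kerVec hl
  have hdecomp : y = MulOpposite.op (y j) • zj + zl := by
    have hCy : C *ᵥ (y - zl) = 0 := by
      rw [mulVec_sub, mulVec_insertNth_zero_kerVec hjl, sub_zero]
      funext r
      exact congrFun hy (s.succAbove r)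
    have hyl : (y - zl) l = 0 := by simp [y, zl, ← hld]
    rw [← sub_eq_iff_eq_add, eq_op_smul_insertNth_zero_kerVec hlj hCy hyl, hjd]
    simp [zj, zl]
  rw [← dotProduct_insertNth_zero_kerVec, ← dotProduct_insertNth_zero_kerVec,
    ← op_smul_eq_mul, ← dotProduct_smul, ← dotProduct_add, ← hdecomp]
  exact congrFun hy s

/-- row homological relation for quasi-determinants.  For an
`N×N` matrix `A` with the relevant quasi-determinants defined and invertible,
and indices `s ≠ i`, `l ≠ j`, one has
`−|A|_{ij} · (|A^{il}|_{sj})⁻¹ = |A|_{il} · (|A^{ij}|_{sl})⁻¹`.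
Here the row `s ≠ i` is encoded as `i.succAbove s`, the column `j` within
`A^{il}` is encoded by `jd` with `l.succAbove jd = j` (hence `j ≠ l`), and the
column `l` within `A^{ij}` by `ld` with `j.succAbove ld = l`. -/
theorem stmt11 {R : Type*} [Ring R] {N : ℕ}
    (A : Matrix (Fin (N + 2)) (Fin (N + 2)) R)
    (i j l : Fin (N + 2)) (s jd ld : Fin (N + 1))
    (hjd : l.succAbove jd = j) (hld : j.succAbove ld = l)
    (h1 : IsUnit (A.submatrix i.succAbove j.succAbove))
    (h2 : IsUnit (A.submatrix i.succAbove l.succAbove))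
    (h3 : IsUnit ((A.submatrix i.succAbove l.succAbove).submatrix
      s.succAbove jd.succAbove))
    (h4 : IsUnit ((A.submatrix i.succAbove j.succAbove).submatrix
      s.succAbove ld.succAbove))
    (h5 : IsUnit (quasiDet (A.submatrix i.succAbove l.succAbove) s jd))
    (h6 : IsUnit (quasiDet (A.submatrix i.succAbove j.succAbove) s ld)) :
    -(quasiDet A i j *
        Ring.inverse (quasiDet (A.submatrix i.succAbove l.succAbove) s jd))
      = quasiDet A i l *
          Ring.inverse (quasiDet (A.submatrix i.succAbove j.succAbove) s ld) := by
  set D₁ := quasiDet (A.submatrix i.succAbove l.succAbove) s jd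
  set D₂ := quasiDet (A.submatrix i.succAbove j.succAbove) s ld
  have hrel : D₁ * kerVec (A.submatrix i.succAbove id) l j + D₂ = 0 :=
    quasiDet_mul_kerVec_add_quasiDet (A.submatrix i.succAbove id) s hjd hld h2 h3 h4
  have hc : kerVec (A.submatrix i.succAbove id) l j = -(Ring.inverse D₁ * D₂) := by
    rw [← Ring.inverse_mul_cancel_left _ (kerVec _ l j) h5, eq_neg_of_add_eq_zero_left hrel,
      mul_neg]
  rw [quasiDet_eq_quasiDet_mul_kerVec A i j l h1 h2, hc]
  simp [mul_assoc, Ring.mul_inverse_cancel _ h6]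
end

section
/- Laplace-type row expansion for quasi-determinants: for an N×N matrix A over a ring, s ≠ i, and all quasi-determinants appearing defined and invertible, |A|_{ij} = a_{ij} − Σ_{k≠j} a_{ik} (|A^{ij}|_{sk})⁻¹ |A^{ik}|_{sj}. -/
/-!
Put `B = A^{ij}`, let `c` be column `j` of `A` without row `i`, and `u = B⁻¹ c`, so that
`|A|_{ij} = a_{ij} - Σ_k a_{ik} u_k`. Up to the order of its columns, `A^{ik}` (`k ≠ j`) is `B`
with column `k` replaced by `c = B u`. Subtracting from row `s` of `B` the combination of the other
rows that agrees with it off column `k` leaves a row vanishing off column `k` with `|B|_{sk}` in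
column `k`; pairing it with `u` gives the Cramer-type rule `|A^{ik}|_{sj} = |B|_{sk} u_k`.
Solving for `u_k` gives the expansion.
-/

open Matrix

theorem Fin.succAbove_comp_succAbove_of_succAbove_eq {n : ℕ} {i : Fin (n + 2)}
    {j : Fin (n + 1)} {d : Fin (n + 1)} (h : (i.succAbove j).succAbove d = i) :
    (i.succAbove j).succAbove ∘ d.succAbove = i.succAbove ∘ j.succAbove := by
  obtain rfl : d = j.predAbove i :=
    Fin.succAbove_right_injective (h.trans (Fin.succAbove_succAbove_predAbove i j).symm)
  exact funext (Fin.succAbove_succAbove_succAbove_predAbove i j)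

section QuasiDet

variable {R : Type*} [Ring R] {n : ℕ}

theorem quasiDet_eq_sub_dotProduct (A : Matrix (Fin (n + 1)) (Fin (n + 1)) R)
    (i j : Fin (n + 1)) :
    quasiDet A i j = A i j - A.submatrix id j.succAbove i ⬝ᵥ
      (Ring.inverse (A.submatrix i.succAbove j.succAbove) *ᵥ fun l => A (i.succAbove l) j) := by
  simp [quasiDet, dotProduct, mulVec, Finset.mul_sum, mul_assoc]

noncomputable def quasiRow (B : Matrix (Fin (n + 1)) (Fin (n + 1)) R) (s k : Fin (n + 1)) :
    Fin (n + 1) → R :=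
  B s - (B.submatrix id k.succAbove s ᵥ* Ring.inverse (B.submatrix s.succAbove k.succAbove))
    ᵥ* B.submatrix s.succAbove id

theorem quasiRow_self (B : Matrix (Fin (n + 1)) (Fin (n + 1)) R) (s k : Fin (n + 1)) :
    quasiRow B s k k = quasiDet B s k := by
  rw [quasiDet_eq_sub_dotProduct, dotProduct_mulVec]
  rfl

theorem quasiRow_succAbove {B : Matrix (Fin (n + 1)) (Fin (n + 1)) R} {s k : Fin (n + 1)}
    (hB : IsUnit (B.submatrix s.succAbove k.succAbove)) (p : Fin n) :
    quasiRow B s k (k.succAbove p) = 0 := by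
  change B s (k.succAbove p) - (B.submatrix id k.succAbove s ᵥ*
    Ring.inverse (B.submatrix s.succAbove k.succAbove) ᵥ* B.submatrix s.succAbove k.succAbove) p = 0
  rw [vecMul_vecMul, Ring.inverse_mul_cancel _ hB, vecMul_one]
  exact sub_self _

theorem quasiRow_dotProduct {B : Matrix (Fin (n + 1)) (Fin (n + 1)) R} {s k : Fin (n + 1)}
    (hB : IsUnit (B.submatrix s.succAbove k.succAbove)) (u : Fin (n + 1) → R) :
    quasiRow B s k ⬝ᵥ u = quasiDet B s k * u k := by
  simp [dotProduct, Fin.sum_univ_succAbove _ k, quasiRow_self, quasiRow_succAbove hB]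

theorem quasiDet_eq_quasiRow_dotProduct {B C : Matrix (Fin (n + 1)) (Fin (n + 1)) R}
    {s k d : Fin (n + 1)} (u : Fin (n + 1) → R)
    (hC : C.submatrix id d.succAbove = B.submatrix id k.succAbove)
    (hd : ∀ l, C l d = (B *ᵥ u) l) :
    quasiDet C s d = quasiRow B s k ⬝ᵥ u := by
  have hM : C.submatrix s.succAbove d.succAbove = B.submatrix s.succAbove k.succAbove := by
    simpa [submatrix_submatrix] using congrArg (·.submatrix s.succAbove id) hC
  have hcol : (fun l => C (s.succAbove l) d) = B.submatrix s.succAbove id *ᵥ u :=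
    funext fun l => hd _
  rw [quasiDet_eq_sub_dotProduct, hC, hM, hcol, hd, quasiRow, sub_dotProduct, dotProduct_mulVec,
    dotProduct_mulVec]
  rfl

theorem quasiDet_eq_quasiDet_mul_of_col_eq_mulVec {B C : Matrix (Fin (n + 1)) (Fin (n + 1)) R}
    {s k d : Fin (n + 1)} (u : Fin (n + 1) → R)
    (hC : C.submatrix id d.succAbove = B.submatrix id k.succAbove)
    (hd : ∀ l, C l d = (B *ᵥ u) l)
    (hB : IsUnit (B.submatrix s.succAbove k.succAbove)) :
    quasiDet C s d = quasiDet B s k * u k := by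
  rw [quasiDet_eq_quasiRow_dotProduct u hC hd, quasiRow_dotProduct hB]

end QuasiDet

theorem stmt12_general {R : Type*} [Ring R] {N : ℕ}
    (A : Matrix (Fin (N + 2)) (Fin (N + 2)) R)
    (i j : Fin (N + 2)) (s : Fin (N + 1))
    (jd : Fin (N + 1) → Fin (N + 1))
    (hjd : ∀ k, (j.succAbove k).succAbove (jd k) = j)
    (h1 : IsUnit (A.submatrix i.succAbove j.succAbove))
    (h3 : ∀ k : Fin (N + 1), IsUnit ((A.submatrix i.succAbove j.succAbove).submatrix
      s.succAbove k.succAbove))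
    (h4 : ∀ k : Fin (N + 1),
      IsUnit (quasiDet (A.submatrix i.succAbove j.succAbove) s k)) :
    quasiDet A i j =
      A i j - ∑ k : Fin (N + 1),
        A i (j.succAbove k) *
          Ring.inverse (quasiDet (A.submatrix i.succAbove j.succAbove) s k) *
          quasiDet (A.submatrix i.succAbove (j.succAbove k).succAbove) s (jd k) := by
  set B := A.submatrix i.succAbove j.succAbove
  set c : Fin (N + 1) → R := fun l => A (i.succAbove l) j
  have hBu : B *ᵥ (Ring.inverse B *ᵥ c) = c := by
    rw [mulVec_mulVec, Ring.mul_inverse_cancel _ h1, one_mulVec]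
  have hcramer : ∀ k, quasiDet (A.submatrix i.succAbove (j.succAbove k).succAbove) s (jd k) =
      quasiDet B s k * (Ring.inverse B *ᵥ c) k := fun k =>
    quasiDet_eq_quasiDet_mul_of_col_eq_mulVec _
      (by simp only [B, submatrix_submatrix, Function.comp_id,
        Fin.succAbove_comp_succAbove_of_succAbove_eq (hjd k)])
      (fun l => by simp [hBu, c, hjd k]) (h3 k)
  rw [quasiDet_eq_sub_dotProduct]
  congr 1
  refine Finset.sum_congr rfl fun k _ => ?_
  rw [hcramer, ← mul_assoc, mul_assoc _ (Ring.inverse _), Ring.inverse_mul_cancel _ (h4 k),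
    mul_one]
  rfl

/-- Laplace-type row expansion for quasi-determinants.  For an
`N×N` matrix `A`, a row `s ≠ i` (encoded as `i.succAbove s`), and all
quasi-determinants appearing defined and invertible,
`|A|_{ij} = a_{ij} − Σ_{k≠j} a_{ik} (|A^{ij}|_{sk})⁻¹ |A^{ik}|_{sj}`.
Columns `k ≠ j` are enumerated as `j.succAbove k`; `jd k` is the index of the
column `j` inside `A^{ik}` (i.e. `(j.succAbove k).succAbove (jd k) = j`). -/
theorem stmt12 {R : Type*} [Ring R] {N : ℕ}
    (A : Matrix (Fin (N + 2)) (Fin (N + 2)) R)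
    (i j : Fin (N + 2)) (s : Fin (N + 1))
    (jd : Fin (N + 1) → Fin (N + 1))
    (hjd : ∀ k, (j.succAbove k).succAbove (jd k) = j)
    (h1 : IsUnit (A.submatrix i.succAbove j.succAbove))
    (h2 : ∀ k, IsUnit (A.submatrix i.succAbove (j.succAbove k).succAbove))
    (h3 : ∀ k : Fin (N + 1), IsUnit ((A.submatrix i.succAbove j.succAbove).submatrix
      s.succAbove k.succAbove))
    (h4 : ∀ k : Fin (N + 1),
      IsUnit (quasiDet (A.submatrix i.succAbove j.succAbove) s k)) :
    quasiDet A i j =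
      A i j - ∑ k : Fin (N + 1),
        A i (j.succAbove k) *
          Ring.inverse (quasiDet (A.submatrix i.succAbove j.succAbove) s k) *
          quasiDet (A.submatrix i.succAbove (j.succAbove k).succAbove) s (jd k) :=
  stmt12_general A i j s jd hjd h1 h3 h4
end

section
/- Inversion theorem for quasi-minors: let A be an invertible N×N matrix over a ring with B = A⁻¹, let P, Q ⊆ {1,…,N} with |P| = |Q| < N, and let k ∉ P, l ∉ Q. Then |A^{P∪{k}}_{Q∪{l}}|_{kl} · |B^{I∖Q}_{I∖P}|_{lk} = 1, where I = {1,…,N} and A^{S}_{T} denotes the submatrix of A with rows S and columns T, assuming both quasi-determinants exist. -/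
open Matrix

private lemma schur_key {R : Type*} [Ring R] {n q : Type*} [Fintype n] [Fintype q]
    [DecidableEq n] [DecidableEq q]
    (M N : Matrix (n ⊕ q) (n ⊕ q) R) (hMN : M * N = 1) (hNM : N * M = 1)
    (ha : IsUnit M.toBlocks₁₁) :
    (M.toBlocks₂₂ - M.toBlocks₂₁ * Ring.inverse M.toBlocks₁₁ * M.toBlocks₁₂) * N.toBlocks₂₂ = 1 ∧
    N.toBlocks₂₂ * (M.toBlocks₂₂ - M.toBlocks₂₁ * Ring.inverse M.toBlocks₁₁ * M.toBlocks₁₂)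
      = 1 := by
  set a := M.toBlocks₁₁ with ha'
  set b := M.toBlocks₁₂
  set c := M.toBlocks₂₁
  set d := M.toBlocks₂₂
  set e := N.toBlocks₁₁
  set f := N.toBlocks₁₂
  set g := N.toBlocks₂₁
  set h := N.toBlocks₂₂
  have hM : M = fromBlocks a b c d := (fromBlocks_toBlocks M).symm
  have hN : N = fromBlocks e f g h := (fromBlocks_toBlocks N).symm
  rw [hM, hN, fromBlocks_multiply, ← fromBlocks_one] at hMN hNM
  have h3 : a * f + b * h = 0 := by
    have := congrArg Matrix.toBlocks₁₂ hMN
    simp only [Matrix.toBlocks_fromBlocks₁₂] at this; exact this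
  have h2 : c * f + d * h = 1 := by
    have := congrArg Matrix.toBlocks₂₂ hMN
    simp only [Matrix.toBlocks_fromBlocks₂₂] at this; exact this
  have h4 : g * a + h * c = 0 := by
    have := congrArg Matrix.toBlocks₂₁ hNM
    simp only [Matrix.toBlocks_fromBlocks₂₁] at this; exact this
  have h5 : g * b + h * d = 1 := by
    have := congrArg Matrix.toBlocks₂₂ hNM
    simp only [Matrix.toBlocks_fromBlocks₂₂] at this; exact this
  have hbh : b * h = -(a * f) := eq_neg_of_add_eq_zero_left (by rwa [add_comm] at h3)
  have hhc : h * c = -(g * a) := eq_neg_of_add_eq_zero_left (by rwa [add_comm] at h4)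
  have hinv1 : Ring.inverse a * a = (1 : Matrix n n R) := Ring.inverse_mul_cancel a ha
  have hinv2 : a * Ring.inverse a = (1 : Matrix n n R) := Ring.mul_inverse_cancel a ha
  constructor
  · have e1 : c * Ring.inverse a * b * h = -(c * f) := by
      rw [Matrix.mul_assoc (c * Ring.inverse a) b h, hbh, Matrix.mul_neg,
        Matrix.mul_assoc c (Ring.inverse a) (a * f),
        ← Matrix.mul_assoc (Ring.inverse a) a f, hinv1, Matrix.one_mul]
    rw [Matrix.sub_mul, e1, sub_neg_eq_add, add_comm, h2]
  · have e2 : h * (c * Ring.inverse a * b) = -(g * b) := by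
      rw [← Matrix.mul_assoc h (c * Ring.inverse a) b,
        ← Matrix.mul_assoc h c (Ring.inverse a), hhc, Matrix.neg_mul, Matrix.neg_mul,
        Matrix.mul_assoc g a (Ring.inverse a), hinv2, Matrix.mul_one]
    rw [Matrix.mul_sub, e2, sub_neg_eq_add, add_comm, h5]

/-- inversion theorem for quasi-minors.  Let `A` be an invertible
`N×N` matrix over a ring with `B = A⁻¹`, let `P, Q ⊆ {1,…,N}` with
`|P| = |Q| = m < N`, `k ∉ P`, `l ∉ Q`.  Then
`|A^{P∪{k}}_{Q∪{l}}|_{kl} · |B^{I∖Q}_{I∖P}|_{lk} = 1`.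

Here `N = m + p + 1`; `P` and `Q` are enumerated by the injections `ρ, γ`;
the complements `I∖(P∪{k})` and `I∖(Q∪{l})` are enumerated by `ρc, γc`,
bijectivity of the combined maps expressing the partitions `I = P ⊔ {k} ⊔ …`;
the quasi-determinants are spelled out via the inverses of the complementary
submatrices `A^{P}_{Q}` and `B^{I∖Q∖{l}}_{I∖P∖{k}}`, which are assumed to be
invertible (existence of the two quasi-determinants). -/
theorem stmt13 {R : Type*} [Ring R] {m p : ℕ}
    (A B : Matrix (Fin (m + p + 1)) (Fin (m + p + 1)) R)
    (hAB : A * B = 1) (hBA : B * A = 1)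
    (ρ γ : Fin m → Fin (m + p + 1)) (ρc γc : Fin p → Fin (m + p + 1))
    (k l : Fin (m + p + 1))
    (hrow : Function.Bijective
      (Sum.elim ρ (Sum.elim ρc (fun _ : Unit => k)) : Fin m ⊕ (Fin p ⊕ Unit) → Fin (m + p + 1)))
    (hcol : Function.Bijective
      (Sum.elim γ (Sum.elim γc (fun _ : Unit => l)) : Fin m ⊕ (Fin p ⊕ Unit) → Fin (m + p + 1)))
    (hMA : IsUnit (A.submatrix ρ γ))
    (hMB : IsUnit (B.submatrix γc ρc)) :
    (A k l - ∑ b : Fin m, ∑ a : Fin m,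
        A k (γ b) * Ring.inverse (A.submatrix ρ γ) b a * A (ρ a) l) *
      (B l k - ∑ a : Fin p, ∑ b : Fin p,
        B l (ρc a) * Ring.inverse (B.submatrix γc ρc) a b * B (γc b) k) = 1 := by
  set er : (Fin m ⊕ (Fin p ⊕ Unit)) ≃ Fin (m + p + 1) := Equiv.ofBijective _ hrow with her
  set ec : (Fin m ⊕ (Fin p ⊕ Unit)) ≃ Fin (m + p + 1) := Equiv.ofBijective _ hcol with hec
  set A' : Matrix (Fin m ⊕ (Fin p ⊕ Unit)) (Fin m ⊕ (Fin p ⊕ Unit)) R := A.submatrix er ec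
    with hA'
  set B' : Matrix (Fin m ⊕ (Fin p ⊕ Unit)) (Fin m ⊕ (Fin p ⊕ Unit)) R := B.submatrix ec er
    with hB'
  have hAB' : A' * B' = 1 := by
    rw [hA', hB', submatrix_mul_equiv, hAB, submatrix_one_equiv]
  have hBA' : B' * A' = 1 := by
    rw [hA', hB', submatrix_mul_equiv, hBA, submatrix_one_equiv]
  have hblkA : A'.toBlocks₁₁ = A.submatrix ρ γ := by ext i j; rfl
  have huA : IsUnit A'.toBlocks₁₁ := hblkA ▸ hMA
  obtain ⟨hS1, hS2⟩ := schur_key A' B' hAB' hBA' huA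
  set S := A'.toBlocks₂₂ - A'.toBlocks₂₁ * Ring.inverse A'.toBlocks₁₁ * A'.toBlocks₁₂ with hS
  set H := B'.toBlocks₂₂ with hH
  have hblkB : H.toBlocks₁₁ = B.submatrix γc ρc := by ext i j; rfl
  have huB : IsUnit H.toBlocks₁₁ := hblkB ▸ hMB
  obtain ⟨hT1, hT2⟩ := schur_key H S hS2 hS1 huB
  have hfin := congrFun (congrFun hT2 ()) ()
  simp only [Matrix.mul_apply, Matrix.one_apply_eq, Finset.univ_unique, Finset.sum_singleton]
    at hfin
  have hd : (default : Unit) = () := rfl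
  rw [hd] at hfin
  have eS : (S.toBlocks₂₂) () () = A k l - ∑ b : Fin m, ∑ a : Fin m,
      A k (γ b) * Ring.inverse (A.submatrix ρ γ) b a * A (ρ a) l := by
    show S (Sum.inr ()) (Sum.inr ()) = _
    rw [hS, hblkA]
    simp only [Matrix.sub_apply, Matrix.mul_apply, Finset.sum_mul]
    rw [Finset.sum_comm]
    rfl
  have eT : (H.toBlocks₂₂ - H.toBlocks₂₁ * Ring.inverse H.toBlocks₁₁ * H.toBlocks₁₂) () ()
      = B l k - ∑ a : Fin p, ∑ b : Fin p,
        B l (ρc a) * Ring.inverse (B.submatrix γc ρc) a b * B (γc b) k := by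
    rw [hblkB]
    simp only [Matrix.sub_apply, Matrix.mul_apply, Finset.sum_mul]
    rw [Finset.sum_comm]
    rfl
  rw [eS, eT] at hfin
  exact hfin
end

section
/- Gauss (LDU from the bottom-right) decomposition via quasi-determinants: let A be an N×N matrix over a ring such that the quasi-determinants ℍ_k = |A^{k,…,N}_{k,…,N}|_{kk} exist and are invertible for all k. Then A = E · H · F where H = diag(ℍ₁,…,ℍ_N), E is upper unitriangular with E_{ij} = |A^{i,j+1,…,N}_{j,j+1,…,N}|_{ij} · ℍ_j⁻¹ for i < j, and F is lower unitriangular with F_{ji} = ℍ_j⁻¹ · |A^{j,j+1,…,N}_{i,j+1,…,N}|_{ji} for i < j. -/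
open Matrix

variable {R : Type*} [Ring R] {n : ℕ}

/-- The trailing submatrix `A^{k+1,…,N}_{k+1,…,N}` (rows and columns `> k`). -/
def trailing (A : Matrix (Fin n) (Fin n) R) (k : Fin n) :
    Matrix {x : Fin n // k < x} {x : Fin n // k < x} R :=
  Matrix.of fun a b => A a b

/-- The quasi-determinant `ℍ_k = |A^{k,…,N}_{k,…,N}|_{kk}`. -/
noncomputable def gaussH (A : Matrix (Fin n) (Fin n) R) (k : Fin n) : R :=
  A k k - ∑ c : {x : Fin n // k < x}, ∑ r : {x : Fin n // k < x},
    A k c * Ring.inverse (trailing A k) c r * A r k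

/-- The entry `𝔼_{ij} = |A^{i,j+1,…,N}_{j,j+1,…,N}|_{ij} · ℍ_j⁻¹` (for `i < j`). -/
noncomputable def gaussE (A : Matrix (Fin n) (Fin n) R) (i j : Fin n) : R :=
  (A i j - ∑ c : {x : Fin n // j < x}, ∑ r : {x : Fin n // j < x},
      A i c * Ring.inverse (trailing A j) c r * A r j) *
    Ring.inverse (gaussH A j)

/-- The entry `𝔽_{ji} = ℍ_j⁻¹ · |A^{j,j+1,…,N}_{i,j+1,…,N}|_{ji}` (for `i < j`). -/
noncomputable def gaussF (A : Matrix (Fin n) (Fin n) R) (j i : Fin n) : R :=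
  Ring.inverse (gaussH A j) *
    (A j i - ∑ c : {x : Fin n // j < x}, ∑ r : {x : Fin n // j < x},
      A j c * Ring.inverse (trailing A j) c r * A r i)

/-!
Write `S_k(i, j) = A i j - A_{i,>k} (A_{>k,>k})⁻¹ A_{>k,j}` for the Schur complement of
the trailing block `> k`, so that `ℍ_k = S_k(k, k)`, `𝔼_{ik} = S_k(i, k) ℍ_k⁻¹` and
`𝔽_{kj} = ℍ_k⁻¹ S_k(k, j)`. Enlarging the trailing block by the single index `k` is a
rank-one update, `S_{k-1}(i, j) = S_k(i, j) - S_k(i, k) ℍ_k⁻¹ S_k(k, j)`, and at the last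
level the block is empty, so `S = A`. Telescoping gives
`A i j = ∑_{k ≥ max i j} S_k(i, k) ℍ_k⁻¹ S_k(k, j)`, which is the `(i, j)` entry of `E · H · F`.
-/
section SchurComplement

variable {ι : Type*} [Fintype ι] [DecidableEq ι]

/-- The `(i, j)` entry `M i j - M_{i,P} (M_{P,P})⁻¹ M_{P,j}` of the Schur complement of the
block `P` of `M`, i.e. the quasi-determinant `|M^{i ∪ P}_{j ∪ P}|_{ij}`. -/
noncomputable def schurComplement (M : Matrix ι ι R) (P : ι → Prop) [DecidablePred P]
    (i j : ι) : R :=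
  M i j - (fun c : {x // P x} => M i c) ᵥ* Ring.inverse (M.toSquareBlockProp P) ⬝ᵥ
    fun r : {x // P x} => M r j

lemma sum_sum_mul_mul_eq_vecMul_dotProduct {m : Type*} [Fintype m] (u : m → R)
    (N : Matrix m m R) (w : m → R) : ∑ c, ∑ r, u c * N c r * w r = u ᵥ* N ⬝ᵥ w := by
  simp only [dotProduct, vecMul, Finset.sum_mul]
  exact Finset.sum_comm

lemma sum_subtype_eq_add_sum_subtype {M : Type*} [AddCommMonoid M] {P Q : ι → Prop}
    [DecidablePred P] [DecidablePred Q] {p : ι} (hP : ∀ x, P x ↔ x = p ∨ Q x) (hQp : ¬Q p)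
    (f : {x // P x} → M) :
    ∑ x, f x = f ⟨p, (hP p).2 (.inl rfl)⟩ + ∑ x : {x // Q x}, f ⟨x, (hP x).2 (.inr x.2)⟩ := by
  rw [Fintype.sum_eq_add_sum_subtype_ne _ ⟨p, (hP p).2 (.inl rfl)⟩]
  congr 1
  refine Fintype.sum_equiv
    { toFun := fun x =>
        ⟨x.1.1, ((hP x.1.1).1 x.1.2).resolve_left fun h => x.2 (Subtype.ext h)⟩
      invFun := fun x => ⟨⟨x, (hP x).2 (.inr x.2)⟩, fun h => hQp (Subtype.mk.inj h ▸ x.2)⟩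
      left_inv := fun _ => rfl
      right_inv := fun _ => rfl } _ _ fun _ => rfl

/-- Heredity of quasi-determinants (the quotient formula for Schur complements). -/
theorem schurComplement_insert {M : Matrix ι ι R} {P Q : ι → Prop}
    [DecidablePred P] [DecidablePred Q] {p : ι} (hP : ∀ x, P x ↔ x = p ∨ Q x) (hQp : ¬Q p)
    (hD : IsUnit (M.toSquareBlockProp P)) (hD₀ : IsUnit (M.toSquareBlockProp Q))
    (hS : IsUnit (schurComplement M Q p p)) (i j : ι) :
    schurComplement M P i j = schurComplement M Q i j -
      schurComplement M Q i p * Ring.inverse (schurComplement M Q p p) *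
        schurComplement M Q p j := by
  set row : ι → {x // Q x} → R := fun a c => M a c
  set col : ι → {x // Q x} → R := fun b r => M r b
  have hQ : ∀ a b, schurComplement M Q a b =
      M a b - row a ᵥ* Ring.inverse (M.toSquareBlockProp Q) ⬝ᵥ col b := fun _ _ => rfl
  -- `z` is the row `M_{i,P} (M_{P,P})⁻¹`, which we solve for block by block.
  set z := (fun c : {x // P x} => M i c) ᵥ* Ring.inverse (M.toSquareBlockProp P)
  set zp := z ⟨p, (hP p).2 (.inl rfl)⟩
  set z₀ : {x // Q x} → R := fun x => z ⟨x, (hP x).2 (.inr x.2)⟩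
  have hsplit : ∀ b, z ⬝ᵥ (fun r : {x // P x} => M r b) = zp * M p b + z₀ ⬝ᵥ col b :=
    fun b => sum_subtype_eq_add_sum_subtype hP hQp _
  have hz : ∀ b : {x // P x}, z ⬝ᵥ (fun r : {x // P x} => M r b) = M i b := fun b => by
    change (z ᵥ* M.toSquareBlockProp P) b = M i b
    rw [vecMul_vecMul, Ring.inverse_mul_cancel _ hD, vecMul_one]
  have hz₀ : z₀ = (row i - zp • row p) ᵥ* Ring.inverse (M.toSquareBlockProp Q) := by
    have h : z₀ ᵥ* M.toSquareBlockProp Q = row i - zp • row p := funext fun c => by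
      have := hz ⟨c, (hP c).2 (.inr c.2)⟩
      rw [hsplit] at this
      change z₀ ⬝ᵥ col c = M i c - zp * M p c
      rw [← this, add_sub_cancel_left]
    rw [← h, vecMul_vecMul, Ring.mul_inverse_cancel _ hD₀, vecMul_one]
  have hdot : ∀ b, z ⬝ᵥ (fun r : {x // P x} => M r b) =
      M i b - schurComplement M Q i b + zp * schurComplement M Q p b := fun b => by
    rw [hsplit, hz₀, sub_vecMul, sub_dotProduct, smul_vecMul, smul_dotProduct, hQ, hQ]
    simp only [smul_eq_mul, mul_sub]
    abel
  have hzp : zp = schurComplement M Q i p * Ring.inverse (schurComplement M Q p p) := by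
    have h : zp * schurComplement M Q p p = schurComplement M Q i p := by
      have := hdot p
      rw [hz ⟨p, (hP p).2 (.inl rfl)⟩, eq_comm, sub_add, sub_eq_self, sub_eq_zero] at this
      exact this.symm
    rw [← h, mul_assoc, Ring.mul_inverse_cancel _ hS, mul_one]
  change M i j - z ⬝ᵥ _ = _
  rw [hdot, hzp]
  abel

lemma schurComplement_of_forall_not {M : Matrix ι ι R} {P : ι → Prop} [DecidablePred P]
    (hP : ∀ x, ¬P x) (i j : ι) : schurComplement M P i j = M i j := by
  have : IsEmpty {x // P x} := ⟨fun x => hP x x.2⟩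
  simp [schurComplement, dotProduct]

end SchurComplement

section Gauss

variable (A : Matrix (Fin n) (Fin n) R)

lemma gaussH_eq_schurComplement (k : Fin n) : gaussH A k = schurComplement A (k < ·) k k := by
  rw [gaussH, schurComplement, ← sum_sum_mul_mul_eq_vecMul_dotProduct]
  rfl

lemma gaussE_eq_schurComplement (i j : Fin n) :
    gaussE A i j = schurComplement A (j < ·) i j * Ring.inverse (gaussH A j) := by
  rw [gaussE, schurComplement, ← sum_sum_mul_mul_eq_vecMul_dotProduct]
  rfl

lemma gaussF_eq_schurComplement (j i : Fin n) :
    gaussF A j i = Ring.inverse (gaussH A j) * schurComplement A (j < ·) j i := by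
  rw [gaussF, schurComplement, ← sum_sum_mul_mul_eq_vecMul_dotProduct]
  rfl

variable {A}

theorem eq_schurComplement_add_sum_Ioi (htr : ∀ k, IsUnit (trailing A k))
    (hH : ∀ k, IsUnit (gaussH A k)) (m i j : Fin n) :
    A i j = schurComplement A (m < ·) i j + ∑ k ∈ Finset.Ioi m,
      schurComplement A (k < ·) i k * Ring.inverse (gaussH A k) *
        schurComplement A (k < ·) k j := by
  obtain _ | n := n
  · exact m.elim0
  induction m using Fin.reverseInduction with
  | last =>
    rw [schurComplement_of_forall_not fun x => (Fin.le_last x).not_gt,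
      Finset.Ioi_eq_empty.2 fun b _ => Fin.le_last b, Finset.sum_empty, add_zero]
  | cast k ih =>
    have hIoi : Finset.Ioi k.castSucc = insert k.succ (Finset.Ioi k.succ) := by
      ext x
      simp [Fin.castSucc_lt_iff_succ_le, le_iff_eq_or_lt, eq_comm]
    have hstep := schurComplement_insert (Q := (k.succ < ·)) (p := k.succ)
      (fun x => by rw [Fin.castSucc_lt_iff_succ_le, le_iff_eq_or_lt, eq_comm]) (lt_irrefl _)
      (htr _) (htr _) (gaussH_eq_schurComplement A _ ▸ hH _) i j
    rw [hIoi, Finset.sum_insert (by simp), hstep, gaussH_eq_schurComplement, ih]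
    abel

theorem eq_sum_Ici_max (htr : ∀ k, IsUnit (trailing A k)) (hH : ∀ k, IsUnit (gaussH A k))
    (i j : Fin n) :
    A i j = ∑ k ∈ Finset.Ici (max i j),
      schurComplement A (k < ·) i k * Ring.inverse (gaussH A k) *
        schurComplement A (k < ·) k j := by
  rw [← Finset.Ioi_insert, Finset.sum_insert (by simp),
    eq_schurComplement_add_sum_Ioi htr hH (max i j)]
  congr 1
  rcases le_total i j with h | h
  · rw [max_eq_right h, ← gaussH_eq_schurComplement, mul_assoc, Ring.inverse_mul_cancel _ (hH j),
      mul_one]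
  · rw [max_eq_left h, ← gaussH_eq_schurComplement, Ring.mul_inverse_cancel _ (hH i), one_mul]

lemma ite_gaussE_eq {x : Fin n} (hH : IsUnit (gaussH A x)) (i : Fin n) :
    (if i = x then (1 : R) else if i < x then gaussE A i x else 0) =
      if i ≤ x then schurComplement A (x < ·) i x * Ring.inverse (gaussH A x) else 0 := by
  rcases lt_trichotomy i x with h | rfl | h
  · simp [h, h.ne, h.le, gaussE_eq_schurComplement]
  · simp [← gaussH_eq_schurComplement, Ring.mul_inverse_cancel _ hH]
  · simp [h.ne', h.not_gt, h.not_ge]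

lemma ite_gaussF_eq {x : Fin n} (hH : IsUnit (gaussH A x)) (j : Fin n) :
    (if x = j then (1 : R) else if j < x then gaussF A x j else 0) =
      if j ≤ x then Ring.inverse (gaussH A x) * schurComplement A (x < ·) x j else 0 := by
  rcases lt_trichotomy j x with h | rfl | h
  · simp [h, h.ne', h.le, gaussF_eq_schurComplement]
  · simp [← gaussH_eq_schurComplement, Ring.inverse_mul_cancel _ hH]
  · simp [h.ne, h.not_gt, h.not_ge]

/-- Gauss decomposition via quasi-determinants.  If the
quasi-determinants `ℍ_k = |A^{k,…,N}_{k,…,N}|_{kk}` exist (the trailing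
submatrices being invertible) and are invertible, then `A = E · H · F` with
`H = diag(ℍ₁,…,ℍ_N)`, `E` upper unitriangular with
`E_{ij} = |A^{i,j+1,…,N}_{j,j+1,…,N}|_{ij} ℍ_j⁻¹`, and `F` lower
unitriangular with `F_{ji} = ℍ_j⁻¹ |A^{j,j+1,…,N}_{i,j+1,…,N}|_{ji}`. -/
theorem stmt14 (A : Matrix (Fin n) (Fin n) R)
    (htr : ∀ k : Fin n, IsUnit (trailing A k))
    (hH : ∀ k : Fin n, IsUnit (gaussH A k)) :
    A =
      (Matrix.of fun i j : Fin n =>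
          if i = j then (1 : R) else if i < j then gaussE A i j else 0) *
        Matrix.diagonal (fun k => gaussH A k) *
        (Matrix.of fun j i : Fin n =>
          if j = i then (1 : R) else if i < j then gaussF A j i else 0) := by
  ext i j
  rw [mul_apply, eq_sum_Ici_max htr hH, ← Finset.filter_le_eq_Ici, Finset.sum_filter]
  refine Finset.sum_congr rfl fun k _ => ?_
  rw [mul_diagonal, of_apply, of_apply, ite_gaussE_eq (hH k), ite_gaussF_eq (hH k)]
  simp only [max_le_iff]
  split_ifs <;> simp_all [mul_assoc, Ring.inverse_mul_cancel _ (hH k)]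

end Gauss
end

section
/- Inverse of the unitriangular Gauss factors in the commutative case: with J = E H F as above, the entries of E⁻¹ and F⁻¹ are (E⁻¹)_{ij} = (−1)^{j−i} det(J^{i,…,ĵ,…,n}_{i+1,…,n}) / det(J^{i+1,…,n}_{i+1,…,n}) and (F⁻¹)_{ji} = (−1)^{j−i} det(J^{i+1,…,n}_{i,…,ĵ,…,n}) / det(J^{i+1,…,n}_{i+1,…,n}) for i ≤ j, where ĵ means index j is omitted; and (E⁻¹)_{ij} = (F⁻¹)_{ji} = 0 for j < i. -/
/-!
Since `E⁻¹ J = H F` is lower triangular, the row `x = (E⁻¹)_{i,·}`, which is `1` at `i` and `0`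
before `i`, satisfies `∑ₖ xₖ J_{kb} = 0` for every column `b > i`. Restricted to the indices
`> i` this says that `-J_{i,·}` is the combination `∑ₖ xₖ J_{k,·}` of the rows of the strict
trailing block `J^{i+1,…,n}_{i+1,…,n}`, so by multilinearity of the determinant `xⱼ` times that
block's determinant is minus the determinant of the block with row `j` replaced by `J_{i,·}`
(Cramer's rule). Cycling the rows `i+1,…,j` turns this matrix into `J^{i,…,ĵ,…,n}_{i+1,…,n}` at
the cost of the sign `(-1)^{j-i-1}`. The formula for `F⁻¹` is the same statement for
`Jᵀ = Fᵀ (E H)ᵀ`.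
-/

open Matrix

variable {K : Type*} [Field K] {n : ℕ}

/-- The trailing principal minor `det(J^{k,…,n}_{k,…,n})`. -/
def trailMinor (J : Matrix (Fin n) (Fin n) K) (k : Fin n) : K :=
  Matrix.det (Matrix.of fun a b : {x : Fin n // k ≤ x} => J a b)

/-- The strict trailing principal minor `det(J^{k+1,…,n}_{k+1,…,n})`. -/
def strictTrailMinor (J : Matrix (Fin n) (Fin n) K) (k : Fin n) : K :=
  Matrix.det (Matrix.of fun a b : {x : Fin n // k < x} => J a b)

/-- The order-preserving enumeration of `{i,…,n}∖{j}` by `{x > i}`: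
position `a` (with `i < a`) corresponds to `a − 1` if `a ≤ j`, else to `a`. -/
def omitIdx {n : ℕ} (j a : Fin n) : Fin n :=
  if a ≤ j then ⟨a.val - 1, lt_of_le_of_lt (Nat.sub_le _ _) a.isLt⟩ else a

/-- The minor `det(J^{i,…,ĵ,…,n}_{i+1,…,n})`: rows `{i,…,n}` omitting `j`,
columns `{x > i}`. -/
def minorEinv (J : Matrix (Fin n) (Fin n) K) (i j : Fin n) : K :=
  Matrix.det (Matrix.of fun a b : {x : Fin n // i < x} => J (omitIdx j a) b)

/-- The minor `det(J^{i+1,…,n}_{i,…,ĵ,…,n})`: rows `{x > i}`, columns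
`{i,…,n}` omitting `j`. -/
def minorFinv (J : Matrix (Fin n) (Fin n) K) (i j : Fin n) : K :=
  Matrix.det (Matrix.of fun a b : {x : Fin n // i < x} => J a (omitIdx j b))

lemma strictTrailMinor_eq_trailMinor (J : Matrix (Fin n) (Fin n) K) {i k : Fin n}
    (hk : (k : ℕ) = i + 1) : strictTrailMinor J i = trailMinor J k := by
  have hik : ∀ x : Fin n, i < x ↔ k ≤ x := fun x => by
    rw [Fin.lt_def, Fin.le_def]; omega
  rw [trailMinor, ← det_submatrix_equiv_self (Equiv.subtypeEquivRight hik)]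
  rfl

lemma strictTrailMinor_of_last (J : Matrix (Fin n) (Fin n) K) {i : Fin n}
    (hi : (i : ℕ) + 1 = n) : strictTrailMinor J i = 1 := by
  have : IsEmpty {x : Fin n // i < x} := ⟨fun x => by have := x.2; rw [Fin.lt_def] at this; omega⟩
  exact det_isEmpty

lemma strictTrailMinor_ne_zero {J : Matrix (Fin n) (Fin n) K}
    (hminor : ∀ k, trailMinor J k ≠ 0) (i : Fin n) : strictTrailMinor J i ≠ 0 := by
  by_cases hi : (i : ℕ) + 1 < n
  · rw [strictTrailMinor_eq_trailMinor J (k := ⟨i + 1, hi⟩) rfl]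
    exact hminor _
  · rw [strictTrailMinor_of_last J (by omega)]
    exact one_ne_zero

lemma minorEinv_self (J : Matrix (Fin n) (Fin n) K) (i : Fin n) :
    minorEinv J i i = strictTrailMinor J i := by
  have : ∀ a : {x : Fin n // i < x}, omitIdx i a = a := fun a => if_neg (not_le.mpr a.2)
  simp only [minorEinv, strictTrailMinor, this]

lemma omitIdx_cycleIcc {i j a : Fin n} (hij : i < j) (hia : i < a) :
    omitIdx j (Fin.cycleIcc ⟨i + 1, by omega⟩ j a) = if a = j then i else a := by
  have : NeZero n := ⟨by omega⟩
  have hia' : (⟨i + 1, by omega⟩ : Fin n) ≤ a := Fin.le_def.mpr (by simp; omega)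
  rcases lt_trichotomy a j with h | rfl | h
  · have hval : ((a + 1 : Fin n) : ℕ) = a + 1 := by
      rw [Fin.val_add_one_of_lt' (by omega)]
    rw [Fin.cycleIcc_of_ge_of_lt hia' h, if_neg h.ne, omitIdx,
      if_pos (Fin.le_def.mpr (by omega))]
    ext; simp [hval]
  · rw [Fin.cycleIcc_of_last hia', if_pos rfl, omitIdx, if_pos hia']
    ext; simp
  · rw [Fin.cycleIcc_of_gt h, if_neg h.ne', omitIdx, if_neg (not_le.mpr h)]

lemma det_updateRow_eq_minorEinv (J : Matrix (Fin n) (Fin n) K) {i j : Fin n} (hij : i < j) :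
    ((of fun a b : {x : Fin n // i < x} => J a b).updateRow ⟨j, hij⟩ (fun b => J i b)).det =
      (-1) ^ ((j : ℕ) - i - 1) * minorEinv J i j := by
  set c := Fin.cycleIcc (⟨i + 1, by omega⟩ : Fin n) j
  have hc_fix : ∀ x, ¬ i < x → c x = x := fun x hx =>
    Fin.cycleIcc_of_lt (Fin.lt_def.mpr (by simp; omega))
  have hc_mem : ∀ x, i < c x ↔ i < x := fun x => by
    refine ⟨fun h => ?_, fun h => ?_⟩
    · by_contra hx; exact (hc_fix x hx ▸ hx) h
    · by_contra hx; exact not_lt.mpr (c.injective (hc_fix _ hx) ▸ le_of_not_gt hx) h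
  set σ := c.subtypePerm hc_mem
  have hsign : Equiv.Perm.sign σ = (-1) ^ ((j : ℕ) - i - 1) := by
    rw [Equiv.Perm.sign_subtypePerm _ _ fun x hx => not_not.mp (mt (hc_fix x) hx),
      Fin.sign_cycleIcc_of_le (Fin.le_def.mpr (by simp; omega))]
    congr 1
  have hperm : (of fun a b : {x : Fin n // i < x} => J a b).updateRow ⟨j, hij⟩ (fun b => J i b) =
      (of fun a b : {x : Fin n // i < x} => J (omitIdx j a) b).submatrix σ id := by
    ext a b
    rw [submatrix_apply, of_apply, id_eq, Equiv.Perm.subtypePerm_apply,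
      omitIdx_cycleIcc hij a.2, updateRow_apply]
    by_cases h : a = ⟨j, hij⟩
    · rw [if_pos h, if_pos (congrArg Subtype.val h)]
    · rw [if_neg h, if_neg (fun h' => h (Subtype.ext h'))]; rfl
  rw [hperm, det_permute, hsign, minorEinv]
  simp

lemma sum_mul_eq_apply_add_sum_gt (J : Matrix (Fin n) (Fin n) K) (x : Fin n → K) {i : Fin n}
    (hx0 : ∀ k < i, x k = 0) (b : Fin n) :
    ∑ k, x k * J k b = x i * J i b + ∑ k : {k : Fin n // i < k}, x k * J k b := by
  rw [← Finset.sum_filter_not_add_sum_filter _ (i < ·),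
    Finset.sum_subtype (Finset.univ.filter (i < ·)) (p := (i < ·)) (by simp)]
  congr 1
  refine Finset.sum_eq_single_of_mem i (by simp) fun k hk hki => ?_
  rw [hx0 k (lt_of_le_of_ne (not_lt.mp (Finset.mem_filter.mp hk).2) hki), zero_mul]

lemma strictTrailMinor_mul_eq_minorEinv (J : Matrix (Fin n) (Fin n) K) (x : Fin n → K)
    {i j : Fin n} (hxi : x i = 1) (hx0 : ∀ k < i, x k = 0)
    (hker : ∀ b, i < b → ∑ k, x k * J k b = 0) (hij : i ≤ j) :
    strictTrailMinor J i * x j = (-1) ^ ((j : ℕ) - i) * minorEinv J i j := by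
  rcases hij.eq_or_lt with rfl | hij
  · rw [minorEinv_self, hxi]; simp
  set A := of fun a b : {x : Fin n // i < x} => J a b
  have hrow : (fun b : {k : Fin n // i < k} => J i b) =
      (-1 : K) • ∑ k : {k : Fin n // i < k}, x k • A k := by
    ext b
    have h := hker b b.2
    rw [sum_mul_eq_apply_add_sum_gt J x hx0, hxi, one_mul] at h
    simp [A, Finset.sum_apply, eq_neg_of_add_eq_zero_left h]
  have hdet := det_updateRow_eq_minorEinv J hij
  rw [hrow, det_updateRow_smul, det_updateRow_sum, smul_eq_mul] at hdet
  have hpow : (-1 : K) ^ ((j : ℕ) - i) = -(-1) ^ ((j : ℕ) - i - 1) := by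
    rw [show (j : ℕ) - i = (j - i - 1) + 1 by omega, pow_succ, Nat.add_sub_cancel]; ring
  rw [hpow, strictTrailMinor]
  linear_combination -hdet

section Unitriangular

variable {R m : Type*} [CommRing R] [Fintype m] [LinearOrder m] {E : Matrix m m R}

lemma det_eq_one_of_isUpperTriangular (hE : E.IsUpperTriangular) (hE1 : ∀ i, E i i = 1) :
    E.det = 1 := by
  simp [det_of_isUpperTriangular hE, hE1]

lemma inv_apply_eq_zero_of_isUpperTriangular (hE : E.IsUpperTriangular) (hE1 : ∀ i, E i i = 1)
    {i j : m} (hji : j < i) : E⁻¹ i j = 0 := by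
  have := E.invertibleOfIsUnitDet (by simp [det_eq_one_of_isUpperTriangular hE hE1])
  exact blockTriangular_inv_of_blockTriangular hE hji

lemma inv_apply_self_of_isUpperTriangular (hE : E.IsUpperTriangular) (hE1 : ∀ i, E i i = 1)
    (i : m) : E⁻¹ i i = 1 := by
  have hdet : IsUnit E.det := by simp [det_eq_one_of_isUpperTriangular hE hE1]
  have h := congrFun (congrFun (nonsing_inv_mul E hdet) i) i
  rw [mul_apply, Finset.sum_eq_single i, hE1, mul_one] at h
  · simpa using h
  · intro k _ hki
    rcases lt_or_gt_of_ne hki with hk | hk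
    · rw [inv_apply_eq_zero_of_isUpperTriangular hE hE1 hk, zero_mul]
    · rw [hE hk, mul_zero]
  · simp

end Unitriangular

theorem inv_apply_eq_minorEinv_div {J E L : Matrix (Fin n) (Fin n) K}
    (hE : E.IsUpperTriangular) (hE1 : ∀ i, E i i = 1) (hL : L.IsLowerTriangular)
    (hJ : J = E * L) {i j : Fin n} (hminor : strictTrailMinor J i ≠ 0) (hij : i ≤ j) :
    E⁻¹ i j = (-1) ^ ((j : ℕ) - i) * minorEinv J i j / strictTrailMinor J i := by
  have hEJ : E⁻¹ * J = L := by
    rw [hJ, ← Matrix.mul_assoc,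
      nonsing_inv_mul _ (by simp [det_eq_one_of_isUpperTriangular hE hE1]), Matrix.one_mul]
  rw [eq_div_iff hminor, mul_comm]
  refine strictTrailMinor_mul_eq_minorEinv J (E⁻¹ i)
    (inv_apply_self_of_isUpperTriangular hE hE1 i)
    (fun k hk => inv_apply_eq_zero_of_isUpperTriangular hE hE1 hk) (fun b hb => ?_) hij
  rw [← mul_apply, hEJ]
  exact hL hb

lemma strictTrailMinor_transpose (J : Matrix (Fin n) (Fin n) K) (i : Fin n) :
    strictTrailMinor Jᵀ i = strictTrailMinor J i :=
  det_transpose _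

lemma minorEinv_transpose (J : Matrix (Fin n) (Fin n) K) (i j : Fin n) :
    minorEinv Jᵀ i j = minorFinv J i j :=
  det_transpose _

/-- inverses of the unitriangular Gauss factors in the
commutative case.  With `J = E H F` the Gauss decomposition (all trailing
principal minors nonzero), the entries of `E⁻¹` and `F⁻¹` are, for `i ≤ j`,
`(E⁻¹)_{ij} = (−1)^{j−i} det(J^{i,…,ĵ,…,n}_{i+1,…,n}) / det(J^{i+1,…,n}_{i+1,…,n})`
and
`(F⁻¹)_{ji} = (−1)^{j−i} det(J^{i+1,…,n}_{i,…,ĵ,…,n}) / det(J^{i+1,…,n}_{i+1,…,n})`,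
while `(E⁻¹)_{ij} = (F⁻¹)_{ji} = 0` for `j < i`. -/
theorem stmt16 (J E H F : Matrix (Fin n) (Fin n) K)
    (hminor : ∀ k : Fin n, trailMinor J k ≠ 0)
    (hE1 : ∀ i, E i i = 1) (hE0 : ∀ i j, j < i → E i j = 0)
    (hH0 : ∀ i j, i ≠ j → H i j = 0)
    (hF1 : ∀ i, F i i = 1) (hF0 : ∀ i j, i < j → F i j = 0)
    (hJ : J = E * H * F) :
    (∀ i j : Fin n, i ≤ j →
      E⁻¹ i j = (-1 : K) ^ ((j : ℕ) - (i : ℕ)) * minorEinv J i j /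
        strictTrailMinor J i) ∧
    (∀ i j : Fin n, i ≤ j →
      F⁻¹ j i = (-1 : K) ^ ((j : ℕ) - (i : ℕ)) * minorFinv J i j /
        strictTrailMinor J i) ∧
    (∀ i j : Fin n, j < i → E⁻¹ i j = 0 ∧ F⁻¹ j i = 0) := by
  have hE : E.IsUpperTriangular := fun i j h => hE0 i j h
  have hFt : Fᵀ.IsUpperTriangular := fun i j h => hF0 j i h
  have hFt1 : ∀ i, Fᵀ i i = 1 := hF1
  have hH : H.IsUpperTriangular ∧ H.IsLowerTriangular :=
    ⟨fun i j h => hH0 i j (ne_of_gt h), fun i j h => hH0 i j (ne_of_lt h)⟩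
  have hF : F.IsLowerTriangular := fun i j h => hF0 i j h
  have hJE : J = E * (H * F) := by rw [hJ, Matrix.mul_assoc]
  have hJF : Jᵀ = Fᵀ * (E * H)ᵀ := by rw [hJ, transpose_mul]
  have hFinv : ∀ i j, F⁻¹ j i = Fᵀ⁻¹ i j := fun i j => by rw [← transpose_nonsing_inv]; rfl
  refine ⟨fun i j hij => ?_, fun i j hij => ?_, fun i j hji => ⟨?_, ?_⟩⟩
  · exact inv_apply_eq_minorEinv_div hE hE1 (hH.2.mul hF) hJE
      (strictTrailMinor_ne_zero hminor i) hij
  · rw [hFinv, inv_apply_eq_minorEinv_div hFt hFt1 (hE.mul hH.1).transpose hJF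
      ((strictTrailMinor_transpose J i).symm ▸ strictTrailMinor_ne_zero hminor i) hij,
      minorEinv_transpose, strictTrailMinor_transpose]
  · exact inv_apply_eq_zero_of_isUpperTriangular hE hE1 hji
  · rw [hFinv]
    exact inv_apply_eq_zero_of_isUpperTriangular hFt hFt1 hji
end
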